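/- Let N ∈ ℕ and let ι : ℂ → ℂ^{N×N} be analytic on B(0,R) with power series ι(λ) = Σ_{k≥0} ι_k λ^k, ι_0 invertible. Let z ∈ ℂ with z ≠ 0 and |1/z| < R, let v₁ ∈ ℂ^N, and define w_j = Σ_{k=0}^{j−1} z^{j−1−k}·(ι_k)ᵀ·v₁ for j ≥ 1. Then: (a) w_1 = ι_0ᵀ v₁ and w_{j+1} = z·w_j + (ι_j)ᵀ v₁ for all j ≥ 1; (b) if z^{−j}·w_j → 0 as j → ∞, then (ι(1/z))ᵀ v₁ = 0; (c) if v₁ ≠ 0 then w_1 ≠ 0. -/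

import Mathlib

/-!
`w_j` is the Horner evaluation of `Σ_{k<j} z^{j-1-k} a_k` with `a_k = ι_kᵀ v₁`, whence the
recursion. Rescaled, `z^{-j} w_j = z⁻¹ Σ_{k<j} z^{-k} a_k` is `z⁻¹` times a partial sum of the
series for `ι(1/z)ᵀ v₁`, so if it tends to `0` that sum vanishes. Finally `w_1 = ι_0ᵀ v₁` and
`ι_0ᵀ` is injective.
-/

open Filter Finset

open Matrix in
theorem HasSum.matrix_mulVec {X m n R : Type*} [Fintype n] [NonUnitalNonAssocSemiring R]
    [TopologicalSpace R] [ContinuousAdd R] [ContinuousMul R]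
    {f : X → Matrix m n R} {A : Matrix m n R} (hf : HasSum f A) (v : n → R) :
    HasSum (fun x => f x *ᵥ v) (A *ᵥ v) :=
  hf.map (mulVec.addMonoidHomLeft v) (continuous_id.matrix_mulVec continuous_const)

section HornerSum

variable {R M : Type*}

def hornerSum [Semiring R] [AddCommMonoid M] [Module R M] (z : R) (a : ℕ → M) (j : ℕ) : M :=
  ∑ k ∈ range j, z ^ (j - 1 - k) • a k

section Semiring
variable [Semiring R] [AddCommMonoid M] [Module R M] (z : R) (a : ℕ → M)

theorem hornerSum_one : hornerSum z a 1 = a 0 := by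
  simp [hornerSum]

theorem hornerSum_succ (j : ℕ) : hornerSum z a (j + 1) = z • hornerSum z a j + a j := by
  rw [hornerSum, hornerSum, sum_range_succ, smul_sum, Nat.add_sub_cancel, Nat.sub_self, pow_zero,
    one_smul]
  congr 1
  refine sum_congr rfl fun k hk => ?_
  rw [smul_smul, ← pow_succ']
  congr 2
  have := mem_range.1 hk
  omega

end Semiring

theorem zpow_neg_smul_hornerSum [DivisionRing R] [AddCommMonoid M] [Module R M] {z : R}
    (hz : z ≠ 0) (a : ℕ → M) (j : ℕ) :
    z ^ (-(j : ℤ)) • hornerSum z a j = z⁻¹ • ∑ k ∈ range j, z⁻¹ ^ k • a k := by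
  rw [hornerSum, smul_sum, smul_sum]
  refine sum_congr rfl fun k hk => ?_
  have hexp : -(j : ℤ) + ((j - 1 - k : ℕ) : ℤ) = -((k + 1 : ℕ) : ℤ) := by
    have := mem_range.1 hk
    omega
  rw [smul_smul, smul_smul, ← zpow_natCast, ← zpow_add₀ hz, hexp, zpow_neg, zpow_natCast,
    ← inv_pow, pow_succ']

theorem eq_zero_of_hasSum_of_tendsto_zpow_neg_smul_hornerSum [DivisionRing R] [TopologicalSpace M]
    [AddCommMonoid M] [Module R M] [ContinuousConstSMul R M] [T2Space M] {z : R} (hz : z ≠ 0)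
    {a : ℕ → M} {S : M} (hS : HasSum (fun k => z⁻¹ ^ k • a k) S)
    (h : Tendsto (fun j : ℕ => z ^ (-(j : ℤ)) • hornerSum z a j) atTop (nhds 0)) : S = 0 := by
  have hpartial : Tendsto (fun j => ∑ k ∈ range j, z⁻¹ ^ k • a k) atTop (nhds 0) := by
    simpa only [zpow_neg_smul_hornerSum hz, smul_smul, mul_inv_cancel₀ hz, one_smul,
      smul_zero] using h.const_smul z
  exact tendsto_nhds_unique hS.tendsto_sum_nat hpartial

end HornerSum

theorem adjoint_kernel_characterization_general
    (N : ℕ) (R : ℝ)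
    (ιf : ℂ → Matrix (Fin N) (Fin N) ℂ) (ιc : ℕ → Matrix (Fin N) (Fin N) ℂ)
    (hser : ∀ w : ℂ, ‖w‖ < R → HasSum (fun k => w ^ k • ιc k) (ιf w))
    (hunit : IsUnit (ιc 0))
    (z : ℂ) (hz : z ≠ 0) (hzR : ‖z⁻¹‖ < R) (v₁ : Fin N → ℂ)
    (w : ℕ → Fin N → ℂ)
    (hw : ∀ j : ℕ, w j =
      ∑ k ∈ Finset.range j, z ^ (j - 1 - k) • ((ιc k).transpose).mulVec v₁) :
    (w 1 = ((ιc 0).transpose).mulVec v₁ ∧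
      ∀ j : ℕ, 1 ≤ j → w (j + 1) = z • w j + ((ιc j).transpose).mulVec v₁) ∧
    (Tendsto (fun j : ℕ => z ^ (-(j : ℤ)) • w j) atTop (nhds 0) →
      ((ιf z⁻¹).transpose).mulVec v₁ = 0) ∧
    (v₁ ≠ 0 → w 1 ≠ 0) := by
  set a : ℕ → Fin N → ℂ := fun k => ((ιc k).transpose).mulVec v₁
  obtain rfl : w = hornerSum z a := funext hw
  have hsum : HasSum (fun k => z⁻¹ ^ k • a k) (((ιf z⁻¹).transpose).mulVec v₁) := by
    simpa only [Matrix.transpose_smul, Matrix.smul_mulVec] using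
      (hser z⁻¹ hzR).matrix_transpose.matrix_mulVec v₁
  refine ⟨⟨hornerSum_one z a, fun j _ => hornerSum_succ z a j⟩,
    eq_zero_of_hasSum_of_tendsto_zpow_neg_smul_hornerSum hz hsum, fun hv => ?_⟩
  have hinj := Matrix.mulVec_injective_iff_isUnit.2 ((Matrix.isUnit_transpose _).2 hunit)
  simpa [hornerSum_one, a] using hinj.ne hv

/-- Characterization of kernel elements of the adjoint of the inverse power
operator: for `w_j = Σ_{k=0}^{j−1} z^{j−1−k} ι_kᵀ v₁` one has the recursion
`w_1 = ι₀ᵀ v₁`, `w_{j+1} = z·w_j + ι_jᵀ v₁`; if `z^{−j} w_j → 0` then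
`ι(1/z)ᵀ v₁ = 0`; and `w_1 ≠ 0` whenever `v₁ ≠ 0`. -/
theorem adjoint_kernel_characterization
    (N : ℕ) (R : ℝ)
    (ιf : ℂ → Matrix (Fin N) (Fin N) ℂ) (ιc : ℕ → Matrix (Fin N) (Fin N) ℂ)
    (hser : ∀ w : ℂ, ‖w‖ < R → HasSum (fun k => w ^ k • ιc k) (ιf w))
    (hunit : IsUnit (ιc 0)) (hc0 : ιc 0 = ιf 0)
    (z : ℂ) (hz : z ≠ 0) (hzR : ‖z⁻¹‖ < R) (v₁ : Fin N → ℂ)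
    (w : ℕ → Fin N → ℂ)
    (hw : ∀ j : ℕ, w j =
      ∑ k ∈ Finset.range j, z ^ (j - 1 - k) • ((ιc k).transpose).mulVec v₁) :
    (w 1 = ((ιc 0).transpose).mulVec v₁ ∧
      ∀ j : ℕ, 1 ≤ j → w (j + 1) = z • w j + ((ιc j).transpose).mulVec v₁) ∧
    (Tendsto (fun j : ℕ => z ^ (-(j : ℤ)) • w j) atTop (nhds 0) →
      ((ιf z⁻¹).transpose).mulVec v₁ = 0) ∧
    (v₁ ≠ 0 → w 1 ≠ 0) :=
  adjoint_kernel_characterization_general N R ιf ιc hser hunit z hz hzR v₁ w hw
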